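/- arXiv:math/0104046 — 3 statements merged into one kernel-verified Lean document; each statement's English description precedes it below -/
import Mathlib

section
/- Let X be an integral locally noetherian space with big injective E_X. Then every nonzero torsion-free object of Mod X has a nonzero subobject that is isomorphic to a subobject of E_X. -/
open CategoryTheory CategoryTheory.Limits

universe w v u

section Preliminaries

variable {C : Type u} [Category.{v} C]

/-- An object of a category is *noetherian* if its lattice of subobjects satisfies
the ascending chain condition. -/
def IsNoetherianObject (N : C) : Prop := WellFoundedGT (Subobject N)

/-- A Grothendieck category (non-commutative space) is *locally noetherian* if it has a
set of noetherian generators, i.e. a separating family of noetherian objects. -/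
def LocallyNoetherian (C : Type u) [Category.{v} C] : Prop :=
  ∃ (ι : Type v) (G : ι → C), (∀ i, _root_.IsNoetherianObject (G i)) ∧
    ObjectProperty.IsSeparating (Set.range G)

/-- `M` is a subquotient of `N`: a quotient of a subobject of `N`. -/
def IsSubquotient (N M : C) : Prop :=
  ∃ (S : Subobject N) (f : (S : C) ⟶ M), Epi f

end Preliminaries

/-- Any abelian category has finite biproducts. -/
instance (priority := 100) abelianHasFiniteBiproducts {C : Type u} [Category.{v} C]
    [Abelian C] : HasFiniteBiproducts C :=
  HasFiniteBiproducts.of_hasFiniteProducts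

section BigInjective

variable {C : Type u} [Category.{v} C] [Abelian C] [HasColimits C] [AB5 C]

/-- `E` is the *big injective* making the locally noetherian space `X` (with `Mod X = C`)
an integral space: `E` is an indecomposable injective object whose endomorphism ring is a
division ring, and every object is a subquotient of a coproduct of copies of `E`. -/
structure IsBigInjective (E : C) : Prop where
  injective : Injective E
  nonzero : ¬ IsZero E
  indecomposable : ∀ (A B : C), (E ≅ A ⊞ B) → IsZero A ∨ IsZero B
  division : ∀ f : E ⟶ E, f ≠ 0 → IsIso f
  generates : ∀ M : C, ∃ ι : Type v, IsSubquotient (∐ (fun _ : ι => E)) M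

/-- An object `M` is *torsion* (with respect to the big injective `E`) if `Hom(M, E) = 0`. -/
def IsTorsion (E M : C) : Prop := ∀ f : M ⟶ E, f = 0

/-- An object `M` is *torsion-free* if its only torsion subobject is `0`. -/
def IsTorsionFree (E M : C) : Prop := ∀ S : Subobject M, IsTorsion E (S : C) → S = ⊥

/-- The *rank* of `M`: the length of `Hom(M, E)` as a left module over the division ring
`End(E)`, expressed as the Krull dimension of its lattice of submodules. -/
noncomputable def rank (E M : C) : WithBot ℕ∞ :=
  Order.krullDim (Submodule (End E) (M ⟶ E))

/-- A subobject `L` of `M` is *essential* if every nonzero subobject of `M` meets it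
nontrivially. -/
def IsEssentialSubobject {M : C} (L : Subobject M) : Prop :=
  ∀ S : Subobject M, S ≠ ⊥ → S ⊓ L ≠ ⊥

end BigInjective

/-!
Write `M` as a quotient `w : S ↠ M` of a subobject `S` of a coproduct of copies of `E`. By AB5,
`S` is the filtered union of its pullbacks to the finite subcoproducts, so `w` is nonzero on one
of them, and its image is a nonzero torsion-free subquotient of a finite power `Eⁿ`.

Induct on `n`. For `A ⊆ Eⁿ⁺¹` and `q : A ↠ M`, either `q` is nonzero on the kernel of the last
projection `A → E`, whose image is then a subquotient of `Eⁿ`, or `q` factors through the image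
of `A → E`, so that `M` is a quotient of a subobject `A' ⊆ E`. In that case, pick `u : M → E`
nonzero (`M` is torsion-free); the map `A' → M → E` extends to a nonzero endomorphism of `E`,
which is invertible, so `A' → M` is mono, hence an isomorphism.
-/

theorem CategoryTheory.Limits.IsColimit.eq_zero_of_forall_pullback_snd_comp_eq_zero
    {C : Type u} [Category.{v} C] [Abelian C] {J : Type w} [SmallCategory J] [IsConnected J]
    [HasColimitsOfShape J C] [HasExactColimitsOfShape J C] {F : J ⥤ C} {c : Cocone F}
    (hc : IsColimit c) {X Y : C} (f : X ⟶ c.pt) (g : X ⟶ Y)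
    (hg : ∀ j, pullback.snd (c.ι.app j) f ≫ g = 0) : g = 0 := by
  refine (hc.pullbackOfHasExactColimitsOfShape f).hom_ext (fun j => ?_)
  rw [← cancel_epi (pullbackObjIso _ _ _).inv]
  simpa using hg j

theorem mono_of_ne_zero_of_mono {C : Type u} [Category.{v} C] [HasZeroMorphisms C] {E : C}
    [Injective E] (hdiv : ∀ f : E ⟶ E, f ≠ 0 → IsIso f)
    {A : C} (m : A ⟶ E) [Mono m] (u : A ⟶ E) (hu : u ≠ 0) : Mono u := by
  have hfac : m ≫ Injective.factorThru u m = u := Injective.comp_factorThru u m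
  have : IsIso (Injective.factorThru u m) :=
    hdiv _ fun h => hu (by rw [← hfac, h, comp_zero])
  rw [← hfac]
  infer_instance

section Torsion

variable {C : Type u} [Category.{v} C] [Abelian C] {E M A : C}

theorem IsTorsion.of_iso (e : A ≅ M) (h : IsTorsion E M) : IsTorsion E A := fun f => by
  rw [← e.hom_inv_id_assoc f, h (e.inv ≫ f), comp_zero]

variable [HasColimits C]

theorem IsTorsionFree.eq_zero_of_mono (h : IsTorsionFree E M) (i : A ⟶ M) [Mono i]
    (hA : IsTorsion E A) : i = 0 := by
  rw [← Subobject.mk_eq_bot_iff_zero]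
  exact h _ (hA.of_iso (Subobject.underlyingIso i))

theorem IsTorsionFree.of_mono (h : IsTorsionFree E M) (i : A ⟶ M) [Mono i] :
    IsTorsionFree E A := by
  intro S hS
  have hSi : S.arrow ≫ i = 0 := h.eq_zero_of_mono _ hS
  rw [← Subobject.mk_arrow S, Subobject.mk_eq_bot_iff_zero]
  exact (cancel_mono i).1 (by rw [hSi, zero_comp])

theorem IsTorsionFree.exists_ne_zero (h : IsTorsionFree E M) (hM : ¬ IsZero M) :
    ∃ u : M ⟶ E, u ≠ 0 := by
  by_contra! hu
  exact hM (IsZero.iff_id_eq_zero M |>.2 (h.eq_zero_of_mono (𝟙 M) hu))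

end Torsion

section CommonSubobject

variable {C : Type u} [Category.{v} C] {E M N : C}

def HasCommonNonzeroSubobject (M E : C) : Prop :=
  ∃ (A : C) (i : A ⟶ M) (f : A ⟶ E), ¬ IsZero A ∧ Mono i ∧ Mono f

theorem hasCommonNonzeroSubobject_of_mono (hM : ¬ IsZero M) (f : M ⟶ E) [Mono f] :
    HasCommonNonzeroSubobject M E :=
  ⟨M, 𝟙 M, f, hM, inferInstance, inferInstance⟩

theorem HasCommonNonzeroSubobject.of_mono (h : HasCommonNonzeroSubobject M E) (j : M ⟶ N)
    [Mono j] : HasCommonNonzeroSubobject N E := by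
  obtain ⟨A, i, f, hA, _, _⟩ := h
  exact ⟨A, i ≫ j, f, hA, mono_comp _ _, inferInstance⟩

theorem HasCommonNonzeroSubobject.exists_subobject [HasZeroMorphisms C] [HasZeroObject C]
    (h : HasCommonNonzeroSubobject M E) :
    ∃ S : Subobject M, S ≠ ⊥ ∧ ∃ f : (S : C) ⟶ E, Mono f := by
  obtain ⟨A, i, f, hA, _, _⟩ := h
  refine ⟨Subobject.mk i, fun hi => hA ?_, (Subobject.underlyingIso i).hom ≫ f, mono_comp _ _⟩
  exact IsZero.of_mono_eq_zero i (Subobject.mk_eq_bot_iff_zero.1 hi)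

end CommonSubobject

section Subquotients

variable {C : Type u} [Category.{v} C] [Abelian C] [HasColimits C] {E P Q : C}

def TorsionFreeSubquotientsMeet (E P : C) : Prop :=
  ∀ ⦃A M : C⦄ (m : A ⟶ P) (q : A ⟶ M), Mono m → Epi q → ¬ IsZero M → IsTorsionFree E M →
    HasCommonNonzeroSubobject M E

theorem TorsionFreeSubquotientsMeet.of_mono (h : TorsionFreeSubquotientsMeet E P)
    (i : Q ⟶ P) [Mono i] : TorsionFreeSubquotientsMeet E Q :=
  fun _ _ m q _ hq hM htf => h (m ≫ i) q (mono_comp _ _) hq hM htf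

theorem TorsionFreeSubquotientsMeet.of_ne_zero (h : TorsionFreeSubquotientsMeet E P)
    {K M : C} (m : K ⟶ P) [Mono m] (c : K ⟶ M) (hc : c ≠ 0) (hM : IsTorsionFree E M) :
    HasCommonNonzeroSubobject M E := by
  have hN : ¬ IsZero (imageSubobject c : C) := fun hN =>
    hc (by rw [← imageSubobject_arrow_comp c, hN.eq_of_tgt (factorThruImageSubobject c) 0,
      zero_comp])
  exact (h m (factorThruImageSubobject c) inferInstance inferInstance hN
    (hM.of_mono (imageSubobject c).arrow)).of_mono (imageSubobject c).arrow

theorem torsionFreeSubquotientsMeet_self [Injective E] (hdiv : ∀ f : E ⟶ E, f ≠ 0 → IsIso f) :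
    TorsionFreeSubquotientsMeet E E := by
  intro A M m q _ _ hM htf
  obtain ⟨u, hu⟩ := htf.exists_ne_zero hM
  have : Mono (q ≫ u) :=
    mono_of_ne_zero_of_mono hdiv m _ fun h => hu (by rwa [← cancel_epi q, comp_zero])
  have : Mono q := mono_of_mono q u
  have : IsIso q := isIso_of_mono_of_epi q
  exact hasCommonNonzeroSubobject_of_mono hM (inv q ≫ m)

theorem TorsionFreeSubquotientsMeet.of_jointly_mono (hP : TorsionFreeSubquotientsMeet E P)
    (hE : TorsionFreeSubquotientsMeet E E) (r : Q ⟶ P) (p : Q ⟶ E)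
    (hrp : ∀ {Z : C} (g : Z ⟶ Q), g ≫ r = 0 → g ≫ p = 0 → g = 0) :
    TorsionFreeSubquotientsMeet E Q := by
  intro A M m q _ _ hM htf
  have : Mono (kernel.ι (m ≫ p) ≫ m ≫ r) := Preadditive.mono_of_cancel_zero _ fun g hg => by
    rw [← cancel_mono (kernel.ι (m ≫ p) ≫ m), zero_comp]
    exact hrp _ (by simpa using hg) (by simp)
  by_cases hk : kernel.ι (m ≫ p) ≫ q = 0
  · -- `q` factors through the coimage of `m ≫ p`, which is a subobject of `E`
    have : Epi (cokernel.desc _ q hk) := epi_of_epi_fac (cokernel.π_desc _ q hk)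
    exact hE (Abelian.factorThruCoimage (m ≫ p)) (cokernel.desc _ q hk) inferInstance
      inferInstance hM htf
  · exact hP.of_ne_zero (kernel.ι (m ≫ p) ≫ m ≫ r) _ hk htf

theorem torsionFreeSubquotientsMeet_biproduct_fin [Injective E]
    (hdiv : ∀ f : E ⟶ E, f ≠ 0 → IsIso f) :
    ∀ n : ℕ, TorsionFreeSubquotientsMeet E (⨁ fun _ : Fin n => E)
  | 0 => by
    have hZ : IsZero (⨁ fun _ : Fin 0 => E) :=
      (IsZero.iff_id_eq_zero _).2 (biproduct.hom_ext _ _ fun j => j.elim0)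
    have := mono_of_source_iso_zero (0 : _ ⟶ E) hZ.isoZero
    exact (torsionFreeSubquotientsMeet_self hdiv).of_mono 0
  | n + 1 => (torsionFreeSubquotientsMeet_biproduct_fin hdiv n).of_jointly_mono
      (torsionFreeSubquotientsMeet_self hdiv)
      (biproduct.lift fun j => biproduct.π _ j.castSucc) (biproduct.π _ (Fin.last n))
      fun g hr hp => biproduct.hom_ext _ _ fun j => by
        induction j using Fin.lastCases with
        | last => simpa using hp
        | cast j => simpa using hr =≫ biproduct.π _ j

theorem torsionFreeSubquotientsMeet_sigma [Injective E] (hdiv : ∀ f : E ⟶ E, f ≠ 0 → IsIso f)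
    (ι : Type*) [Finite ι] : TorsionFreeSubquotientsMeet E (∐ fun _ : ι => E) :=
  (torsionFreeSubquotientsMeet_biproduct_fin hdiv (Nat.card ι)).of_mono
    ((biproduct.isoCoproduct _).inv ≫
      (biproduct.whiskerEquiv (Finite.equivFin ι) fun _ => Iso.refl E).hom)

end Subquotients

open CoproductsFromFiniteFiltered

theorem statement4_general {C : Type u} [Category.{v} C] [Abelian C] [HasColimits C] [AB5 C]
    (E : C) (hE : IsBigInjective E)
    (M : C) (hM0 : ¬ IsZero M) (hMtf : IsTorsionFree E M) :
    ∃ S : Subobject M, S ≠ ⊥ ∧ ∃ f : (S : C) ⟶ E, Mono f := by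
  obtain ⟨ι, S, w, hw⟩ := hE.generates M
  have := hE.injective
  have := IsFiltered.isConnected (Finset (Discrete ι))
  let c := finiteSubcoproductsCocone fun _ : ι => E
  obtain ⟨F, hwF⟩ : ∃ F, pullback.snd (c.ι.app F) S.arrow ≫ w ≠ 0 := by
    by_contra! h
    exact hM0 (IsZero.of_epi_eq_zero w
      ((isColimitFiniteSubproductsCocone _).eq_zero_of_forall_pullback_snd_comp_eq_zero _ w h))
  have hF : TorsionFreeSubquotientsMeet E
      ((liftToFinsetObj (Discrete.functor fun _ : ι => E)).obj F) :=
    torsionFreeSubquotientsMeet_sigma hE.division F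
  -- here `S.arrow` lands in `((Functor.const _).obj c.pt).obj F`, which instance search
  -- does not unfold
  have : Mono (pullback.fst (c.ι.app F) S.arrow) :=
    @pullback.fst_of_mono _ _ _ _ _ _ _ _ (inferInstanceAs (Mono S.arrow))
  exact (hF.of_ne_zero (pullback.fst _ _) _ hwF hMtf).exists_subobject

/-- Theorem 3.12(1). In an integral locally noetherian space with big
injective `E`, every nonzero torsion-free object has a nonzero subobject isomorphic to a
subobject of `E` (equivalently, a nonzero subobject that embeds into `E`). -/
theorem statement4 {C : Type u} [Category.{v} C] [Abelian C] [HasColimits C] [AB5 C]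
    (hX : LocallyNoetherian C) (E : C) (hE : IsBigInjective E)
    (M : C) (hM0 : ¬ IsZero M) (hMtf : IsTorsionFree E M) :
    ∃ S : Subobject M, S ≠ ⊥ ∧ ∃ f : (S : C) ⟶ E, Mono f :=
  statement4_general E hE M hM0 hMtf
end

section
/- Let X be an integral locally noetherian space with big injective E_X. Then any injective object of Mod X that is an essential extension of a torsion-free object of rank one is isomorphic to E_X; in particular, E_X is the unique indecomposable injective object of rank one up to isomorphism. -/
open CategoryTheory CategoryTheory.Limits

universe w v u

/-! A nonzero `f : L ⟶ E` spans the simple `End E`-module `Hom(L, E)`, so every map `ker f ⟶ E`,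
extended to `L`, is a multiple of `f` and vanishes on `ker f`: the kernel is torsion, hence zero.
An extension `g : J ⟶ E` of `f` has a kernel meeting the essential subobject `L` trivially, so `g`
is a mono out of an injective, i.e. a split mono into the indecomposable `E`, hence an iso.

For an indecomposable injective `J` of rank one, a nonzero `f : J ⟶ E` stays nonzero on some
copy of `E` in a coproduct of which `J` is a subquotient (lift through the injective `J`); that
composite `E ⟶ J ⟶ E` is invertible, so `E` is a summand of `J`, hence `E ≅ J`. -/

namespace CategoryTheory

variable {C : Type u} [Category.{v} C]

theorem Injective.isSplitMono_of_mono {A B : C} [Injective A] (g : A ⟶ B) [Mono g] :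
    IsSplitMono g :=
  IsSplitMono.mk' ⟨Injective.factorThru (𝟙 A) g, Injective.comp_factorThru _ _⟩

variable [Abelian C]

theorem Subobject.eq_bot_of_arrow_eq_zero {X : C} (S : Subobject X) (hS : S.arrow = 0) :
    S = ⊥ := by
  rw [← Subobject.mk_arrow S]
  exact Subobject.mk_eq_bot_iff_zero.mpr hS

theorem mono_of_kernelSubobject_eq_bot {X Y : C} (f : X ⟶ Y) (h : kernelSubobject f = ⊥) :
    Mono f :=
  Preadditive.mono_of_cancel_zero f fun u hu =>
    (Subobject.bot_factors_iff_zero u).mp (h ▸ kernelSubobject_factors f u hu)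

theorem isIso_of_isSplitMono_of_indecomposable {A B : C} (h : A ⟶ B) [IsSplitMono h]
    (hB : ∀ X Y : C, (B ≅ X ⊞ Y) → IsZero X ∨ IsZero Y) (hA : ¬ IsZero A) : IsIso h := by
  have hsplit : B ≅ A ⊞ cokernel h := biprod.uniqueUpToIso _ _
    (isBilimitBinaryBiconeOfIsSplitMonoOfCokernel (cokernelIsCokernel h))
  have : Epi h := Abelian.epi_of_cokernel_π_eq_zero h
    (((hB _ _ hsplit).resolve_left hA).eq_of_tgt _ _)
  exact isIso_of_mono_of_epi h

theorem exists_comp_ne_zero_of_isSubquotient_sigma {ι : Type v} {E J Y : C} [Injective J]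
    [HasCoproduct fun _ : ι => E] (hJ : IsSubquotient (∐ fun _ : ι => E) J) {f : J ⟶ Y}
    (hf : f ≠ 0) : ∃ h : E ⟶ J, h ≫ f ≠ 0 := by
  obtain ⟨S, p, hp⟩ := hJ
  by_contra! hzero
  apply hf
  rw [← cancel_epi p, comp_zero, ← Injective.comp_factorThru p S.arrow, Category.assoc]
  convert comp_zero
  exact Sigma.hom_ext _ _ fun i => by
    simpa using hzero (Sigma.ι (fun _ : ι => E) i ≫ Injective.factorThru p S.arrow)

theorem isSimpleModule_of_rank_eq_one {E M : C} (h : rank E M = (1 : ℕ∞)) :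
    IsSimpleModule (End E) (M ⟶ E) :=
  (isSimpleModule_iff _ _).mpr (Order.krullDim_eq_one_iff_of_boundedOrder.mp h)

theorem isTorsion_kernelSubobject_of_span_eq_top {E L : C} [Injective E] {f : L ⟶ E}
    (hf : Submodule.span (End E) {f} = ⊤) : IsTorsion E (kernelSubobject f) := by
  intro t
  obtain ⟨c, hc⟩ := Submodule.mem_span_singleton.mp
    (hf ▸ Submodule.mem_top : Injective.factorThru t (kernelSubobject f).arrow ∈ _)
  rw [← Injective.comp_factorThru t (kernelSubobject f).arrow, ← hc]
  change _ ≫ f ≫ c = 0 -- `End E` acts on `L ⟶ E` by postcomposition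
  rw [← Category.assoc, kernelSubobject_arrow_comp, zero_comp]

variable [HasColimits C]

theorem mono_of_isTorsionFree {E L : C} [Injective E] (hL : IsTorsionFree E L) {f : L ⟶ E}
    (hf : Submodule.span (End E) {f} = ⊤) : Mono f :=
  mono_of_kernelSubobject_eq_bot f (hL _ (isTorsion_kernelSubobject_of_span_eq_top hf))

theorem IsEssentialSubobject.mono_of_mono_arrow_comp {J Y : C} {L : Subobject J}
    (hL : IsEssentialSubobject L) (g : J ⟶ Y) [Mono (L.arrow ≫ g)] : Mono g := by
  refine mono_of_kernelSubobject_eq_bot g (by_contra fun hK => hL _ hK ?_)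
  have hu : Subobject.ofLE (kernelSubobject g ⊓ L) L inf_le_right ≫ L.arrow ≫ g = 0 := by
    rw [← Category.assoc, Subobject.ofLE_arrow, ← Subobject.ofLE_arrow inf_le_left,
      Category.assoc, kernelSubobject_arrow_comp, comp_zero]
  apply Subobject.eq_bot_of_arrow_eq_zero
  rw [← Subobject.ofLE_arrow inf_le_right, zero_of_comp_mono _ hu, zero_comp]

theorem IsBigInjective.nonempty_iso_of_isEssentialSubobject {E J : C} (hE : IsBigInjective E)
    [Injective J] {L : Subobject J} (hL : IsEssentialSubobject L) (htf : IsTorsionFree E L)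
    (hrank : rank E L = (1 : ℕ∞)) : Nonempty (J ≅ E) := by
  have := hE.injective
  have := isSimpleModule_of_rank_eq_one hrank
  have := IsSimpleModule.nontrivial (End E) ((L : C) ⟶ E)
  obtain ⟨f, hf⟩ := exists_ne (0 : (L : C) ⟶ E)
  have : Mono f := mono_of_isTorsionFree htf (IsSimpleModule.span_singleton_eq_top _ hf)
  let g := Injective.factorThru f L.arrow
  have hgf : L.arrow ≫ g = f := Injective.comp_factorThru f L.arrow
  have : Mono (L.arrow ≫ g) := hgf ▸ ‹Mono f›
  have : Mono g := hL.mono_of_mono_arrow_comp g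
  have := Injective.isSplitMono_of_mono g
  have hJ : ¬ IsZero J := fun hJ => hf (by rw [← hgf, hJ.eq_of_tgt L.arrow 0, zero_comp])
  have := isIso_of_isSplitMono_of_indecomposable g hE.indecomposable hJ
  exact ⟨asIso g⟩

theorem IsBigInjective.nonempty_iso_of_indecomposable {E J : C} (hE : IsBigInjective E)
    [Injective J] (hJ : ∀ A B : C, (J ≅ A ⊞ B) → IsZero A ∨ IsZero B)
    (hrank : rank E J = (1 : ℕ∞)) : Nonempty (J ≅ E) := by
  have := isSimpleModule_of_rank_eq_one hrank
  have := IsSimpleModule.nontrivial (End E) (J ⟶ E)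
  obtain ⟨f, hf⟩ := exists_ne (0 : J ⟶ E)
  obtain ⟨ι, hsub⟩ := hE.generates J
  obtain ⟨h, hhf⟩ := exists_comp_ne_zero_of_isSubquotient_sigma hsub hf
  have := hE.division _ hhf
  have : IsSplitMono h :=
    IsSplitMono.mk' ⟨f ≫ inv (h ≫ f), by rw [← Category.assoc, IsIso.hom_inv_id]⟩
  have := isIso_of_isSplitMono_of_indecomposable h hJ hE.nonzero
  exact ⟨(asIso h).symm⟩

end CategoryTheory

theorem statement6_general {C : Type u} [Category.{v} C] [Abelian C] [HasColimits C]
    (E : C) (hE : IsBigInjective E) :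
    (∀ (J : C), Injective J → ∀ L : Subobject J, IsEssentialSubobject L →
        IsTorsionFree E (L : C) → rank E (L : C) = (1 : ℕ∞) → Nonempty (J ≅ E)) ∧
    (∀ (J : C), Injective J → ¬ IsZero J →
        (∀ (A B : C), (J ≅ A ⊞ B) → IsZero A ∨ IsZero B) →
        rank E J = (1 : ℕ∞) → Nonempty (J ≅ E)) :=
  ⟨fun _ _ _ hL htf hrank => hE.nonempty_iso_of_isEssentialSubobject hL htf hrank,
    fun _ _ _ hJ hrank => hE.nonempty_iso_of_indecomposable hJ hrank⟩

/-- Theorem 3.12(3),(4). In an integral locally noetherian space with big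
injective `E`: every injective object which is an essential extension of a torsion-free
object of rank one is isomorphic to `E`; in particular, `E` is the unique indecomposable
injective of rank one, up to isomorphism. -/
theorem statement6 {C : Type u} [Category.{v} C] [Abelian C] [HasColimits C] [AB5 C]
    (hX : LocallyNoetherian C) (E : C) (hE : IsBigInjective E) :
    (∀ (J : C), Injective J → ∀ L : Subobject J, IsEssentialSubobject L →
        IsTorsionFree E (L : C) → rank E (L : C) = (1 : ℕ∞) → Nonempty (J ≅ E)) ∧
    (∀ (J : C), Injective J → ¬ IsZero J →
        (∀ (A B : C), (J ≅ A ⊞ B) → IsZero A ∨ IsZero B) →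
        rank E J = (1 : ℕ∞) → Nonempty (J ≅ E)) :=
  statement6_general E hE
end

section
/- Let X be an integral locally noetherian space with big injective E_X. If L is an essential subobject of an object M of Mod X, then rank L = rank M. -/
open CategoryTheory CategoryTheory.Limits

universe w v u

/-!
Restriction `Hom(M, E) → Hom(L, E)` is `End E`-linear and, `E` being injective, onto. It is
one-to-one because no nonzero `g : T ⟶ E` has an essential kernel. Essential kernels pull back
along arbitrary morphisms, so presenting the source as a quotient of a subobject of `∐ E`
reduces this to subobjects of `∐ E`, and AB5 reduces it further to subobjects of finite sums
`E^n`. There extend `g` to `G : E^n ⟶ E`. If `G ≠ 0`, some component of `G` is an automorphism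
of `E` (`End E` is a division ring); the kernel of the projection discarding that summand then
meets `ker g` trivially, hence is zero, and `T` embeds in `E^(n-1)`.
-/

theorem CategoryTheory.Subobject.arrow_eq_zero_iff {C : Type u} [Category.{v} C]
    [HasZeroMorphisms C] [HasZeroObject C] {X : C} {P : Subobject X} : P.arrow = 0 ↔ P = ⊥ := by
  conv_rhs => rw [← Subobject.mk_arrow P]
  exact Subobject.mk_eq_bot_iff_zero.symm

theorem CategoryTheory.Limits.imageSubobject_ne_bot {C : Type u} [Category.{v} C] [Abelian C]
    {X Y : C} {f : X ⟶ Y} (hf : f ≠ 0) : imageSubobject f ≠ ⊥ := by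
  rw [Ne, ← Subobject.arrow_eq_zero_iff]
  exact fun h => hf (by rw [← imageSubobject_arrow_comp f, h, comp_zero])

theorem CategoryTheory.Limits.biproduct.eq_zero_of_comp_toSubtype_eq_zero {C : Type u}
    [Category.{v} C] [Preadditive C] {J : Type*} {f : J → C} [HasBiproduct f] (i : J)
    [HasBiproduct (Subtype.restrict (· ≠ i) f)] {P Y : C} {x : P ⟶ ⨁ f} {G : ⨁ f ⟶ Y}
    [Mono (biproduct.ι f i ≫ G)] (hx : x ≫ biproduct.toSubtype f (· ≠ i) = 0)
    (hxG : x ≫ G = 0) : x = 0 := by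
  have hx_eq : x = (x ≫ biproduct.π f i) ≫ biproduct.ι f i := by
    refine biproduct.hom_ext _ _ fun j => ?_
    by_cases hj : j = i
    · subst hj
      simp
    · have hxj : x ≫ biproduct.π f j = 0 := by
        have := hx =≫ biproduct.π _ (⟨j, hj⟩ : {j // j ≠ i})
        rwa [Category.assoc, biproduct.toSubtype_π, zero_comp] at this
      simp [hxj, biproduct.ι_π_ne _ (Ne.symm hj)]
  have hπ : x ≫ biproduct.π f i = 0 := by
    rw [← cancel_mono (biproduct.ι f i ≫ G), zero_comp, ← Category.assoc, ← hx_eq, hxG]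
  rw [hx_eq, hπ, zero_comp]

namespace IsEssentialSubobject

variable {C : Type u} [Category.{v} C] [Abelian C] [HasColimits C] {T : C}

theorem mono {K K' : Subobject T} (hK : IsEssentialSubobject K) (h : K ≤ K') :
    IsEssentialSubobject K' :=
  fun S hS hS' => hK S hS (le_bot_iff.1 (hS' ▸ inf_le_inf_left S h))

theorem exists_comp_ne_zero_factors {K : Subobject T} (hK : IsEssentialSubobject K)
    {P : C} {x : P ⟶ T} (hx : x ≠ 0) :
    ∃ (Q : C) (y : Q ⟶ P), y ≫ x ≠ 0 ∧ K.Factors (y ≫ x) := by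
  have hIK := hK _ (imageSubobject_ne_bot hx)
  let t := Subobject.ofLE (imageSubobject x ⊓ K) (imageSubobject x) inf_le_left
  let e := factorThruImageSubobject x
  have hsq : pullback.snd t e ≫ x = pullback.fst t e ≫ (imageSubobject x ⊓ K).arrow := by
    calc pullback.snd t e ≫ x = (pullback.snd t e ≫ e) ≫ (imageSubobject x).arrow := by
          rw [Category.assoc, imageSubobject_arrow_comp]
      _ = _ := by rw [← pullback.condition, Category.assoc, Subobject.ofLE_arrow]
  refine ⟨pullback t e, pullback.snd t e, ?_, ?_⟩
  · rw [hsq]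
    exact fun h => hIK (Subobject.arrow_eq_zero_iff.1 (zero_of_epi_comp _ h))
  · rw [hsq]
    exact Subobject.factors_of_factors_right _ (Subobject.inf_arrow_factors_right _ _)

theorem of_exists_comp_ne_zero_factors {K : Subobject T}
    (h : ∀ {P : C} (x : P ⟶ T), x ≠ 0 →
      ∃ (Q : C) (y : Q ⟶ P), y ≫ x ≠ 0 ∧ K.Factors (y ≫ x)) :
    IsEssentialSubobject K := by
  intro S hS
  obtain ⟨Q, y, hy, hyK⟩ := h S.arrow (mt Subobject.arrow_eq_zero_iff.1 hS)
  refine ne_bot_of_le_ne_bot (imageSubobject_ne_bot hy) (le_inf ?_ ?_)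
  · exact imageSubobject_le _ y rfl
  · exact imageSubobject_le _ _ (Subobject.factorThru_arrow _ _ hyK)

theorem kernelSubobject_comp {T' Y : C} (h : T' ⟶ T) {g : T ⟶ Y}
    (hg : IsEssentialSubobject (kernelSubobject g)) :
    IsEssentialSubobject (kernelSubobject (h ≫ g)) := by
  refine of_exists_comp_ne_zero_factors fun {P} x hx => ?_
  simp only [kernelSubobject_factors_iff, Category.assoc]
  by_cases hxh : x ≫ h = 0
  · exact ⟨P, 𝟙 P, by simpa using hx, by simp [reassoc_of% hxh]⟩
  · obtain ⟨Q, y, hy, hyg⟩ := hg.exists_comp_ne_zero_factors hxh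
    rw [kernelSubobject_factors_iff] at hyg
    exact ⟨Q, y, fun h0 => hy (by rw [← Category.assoc, h0, zero_comp]), by simpa using hyg⟩

theorem mono_comp_toSubtype {J : Type*} {f : J → C} [HasBiproduct f]
    (i : J) [HasBiproduct (Subtype.restrict (· ≠ i) f)] {Y : C} (m : T ⟶ ⨁ f) [Mono m]
    (G : ⨁ f ⟶ Y) [Mono (biproduct.ι f i ≫ G)]
    (hG : IsEssentialSubobject (kernelSubobject (m ≫ G))) :
    Mono (m ≫ biproduct.toSubtype f (· ≠ i)) := by
  refine Preadditive.mono_of_cancel_zero _ fun x hx => by_contra fun hx0 => ?_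
  obtain ⟨Q, y, hy, hyG⟩ := hG.exists_comp_ne_zero_factors hx0
  rw [kernelSubobject_factors_iff] at hyG
  refine hy ((cancel_mono m).1 ?_)
  rw [zero_comp]
  exact biproduct.eq_zero_of_comp_toSubtype_eq_zero i
    (by simp only [Category.assoc, hx, comp_zero]) (by simpa using hyG)

end IsEssentialSubobject

section

variable {C : Type u} [Category.{v} C] [Abelian C] [HasColimits C]

theorem eq_zero_of_mono_biproduct {E : C} [Injective E]
    (hdiv : ∀ f : E ⟶ E, f ≠ 0 → IsIso f)
    {J : Type*} [Finite J] {T : C} (m : T ⟶ ⨁ fun _ : J => E) [Mono m] (g : T ⟶ E)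
    (hg : IsEssentialSubobject (kernelSubobject g)) : g = 0 := by
  induction h : Nat.card J using Nat.strong_induction_on generalizing J T with
  | _ n ih =>
  obtain ⟨G, rfl⟩ : ∃ G, m ≫ G = g :=
    ⟨Injective.factorThru g m, Injective.comp_factorThru g m⟩
  by_cases hG : G = 0
  · rw [hG, comp_zero]
  obtain ⟨i, hi⟩ : ∃ i, biproduct.ι _ i ≫ G ≠ 0 := by
    by_contra! h
    exact hG (biproduct.hom_ext' _ _ (by simpa using h))
  have := hdiv _ hi
  -- `G` is injective on the `i`-th summand, so discarding that summand keeps `T` embedded.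
  let ρ : T ⟶ ⨁ fun _ : {j // j ≠ i} => E := m ≫ biproduct.toSubtype _ (· ≠ i)
  have : Mono ρ := hg.mono_comp_toSubtype i m G
  exact ih _ (h ▸ Finite.card_subtype_lt (p := (· ≠ i)) (not_not.2 rfl)) ρ _ hg rfl

end

section

variable {C : Type u} [Category.{v} C] [Abelian C] [HasColimits C] [AB5 C]

open CoproductsFromFiniteFiltered in
theorem eq_zero_of_mono_sigma {E : C} [Injective E]
    (hdiv : ∀ f : E ⟶ E, f ≠ 0 → IsIso f)
    {ι : Type v} {T : C} (m : T ⟶ ∐ fun _ : ι => E) [Mono m] (g : T ⟶ E)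
    (hg : IsEssentialSubobject (kernelSubobject g)) : g = 0 := by
  obtain ⟨G, rfl⟩ : ∃ G, m ≫ G = g :=
    ⟨Injective.factorThru g m, Injective.comp_factorThru g m⟩
  have : IsConnected (Finset (Discrete ι)) := IsFiltered.isConnected _
  -- AB5: `T` is the filtered union of its intersections with the finite subcoproducts.
  refine (isColimitFiniteSubproductsCocone fun _ : ι => E).pullback_zero_ext fun S => ?_
  let j := pullback.fst ((finiteSubcoproductsCocone fun _ : ι => E).ι.app S) m ≫
    (biproduct.isoCoproduct fun _ : S => E).inv
  have : Mono j := @mono_comp _ _ _ _ _ _ (pullback.fst_of_mono (g := m)) _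
    (inferInstanceAs (Mono (biproduct.isoCoproduct fun _ : S => E).inv))
  exact eq_zero_of_mono_biproduct hdiv j _ (hg.kernelSubobject_comp _)

end

namespace IsBigInjective

variable {C : Type u} [Category.{v} C] [Abelian C] [HasColimits C] [AB5 C] {E : C}

theorem eq_zero_of_isEssentialSubobject_kernelSubobject (hE : IsBigInjective E) {M : C}
    (g : M ⟶ E) (hg : IsEssentialSubobject (kernelSubobject g)) : g = 0 := by
  obtain ⟨ι, S, p, hp⟩ := hE.generates M
  have := hE.injective
  exact zero_of_epi_comp p
    (eq_zero_of_mono_sigma hE.division S.arrow _ (hg.kernelSubobject_comp p))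

theorem eq_zero_of_arrow_comp_eq_zero (hE : IsBigInjective E) {M : C} {L : Subobject M}
    (hL : IsEssentialSubobject L) {f : M ⟶ E} (hf : L.arrow ≫ f = 0) : f = 0 :=
  hE.eq_zero_of_isEssentialSubobject_kernelSubobject f (hL.mono (le_kernelSubobject f L hf))

end IsBigInjective

section

variable {C : Type u} [Category.{v} C]

def leftCompLinearMap [Preadditive C] {A B : C} (E : C) (u : A ⟶ B) :
    (B ⟶ E) →ₗ[End E] (A ⟶ E) where
  toFun f := u ≫ f
  map_add' := Preadditive.comp_add _ _ _ u
  map_smul' _ _ := (Category.assoc _ _ _).symm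

theorem rank_eq_of_linearEquiv [Abelian C] {E M N : C} (e : (M ⟶ E) ≃ₗ[End E] (N ⟶ E)) :
    rank E M = rank E N :=
  Order.krullDim_eq_of_orderIso (Submodule.orderIsoMapComap e)

end

theorem statement8_general {C : Type u} [Category.{v} C] [Abelian C] [HasColimits C] [AB5 C]
    (E : C) (hE : IsBigInjective E)
    (M : C) (L : Subobject M) (hL : IsEssentialSubobject L) :
    rank E (L : C) = rank E M := by
  have := hE.injective
  refine (rank_eq_of_linearEquiv
    (LinearEquiv.ofBijective (leftCompLinearMap E L.arrow) ⟨?_, ?_⟩)).symm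
  · exact (injective_iff_map_eq_zero _).2 fun f hf => hE.eq_zero_of_arrow_comp_eq_zero hL hf
  · exact fun h => ⟨Injective.factorThru h L.arrow, Injective.comp_factorThru h L.arrow⟩

/-- Proposition 3.13. In an integral locally noetherian space with big
injective `E`, if `L` is an essential subobject of `M` then `rank L = rank M`. -/
theorem statement8 {C : Type u} [Category.{v} C] [Abelian C] [HasColimits C] [AB5 C]
    (hX : LocallyNoetherian C) (E : C) (hE : IsBigInjective E)
    (M : C) (L : Subobject M) (hL : IsEssentialSubobject L) :
    rank E (L : C) = rank E M :=
  statement8_general E hE M L hL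
end
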